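/- arXiv:2405.11103 — 2 statements merged into one kernel-verified Lean document; each statement's English description precedes it below -/
import Mathlib

section
/- Let Λ be the 8×8 fermion transition matrix as above, and let λ be the unique real root of x³ − x − 1. Then λ is an eigenvalue of Λ (over ℝ), and every real eigenvalue μ of Λ satisfies μ ≤ λ. -/
/-- The fermion transition matrix, rows/columns indexed in the order
E, M, D, B, U, S, T, C. -/
def Lam : Matrix (Fin 8) (Fin 8) ℝ :=
  !![0, 1, 0, 0, 0, 0, 1, 0;
     1, 0, 0, 0, 0, 0, 0, 0;
     0, 0, 0, 0, 1, 0, 0, 1;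
     0, 0, 0, 0, 0, 0, 1, 1;
     0, 1, 0, 0, 0, 0, 0, 0;
     0, 0, 1, 0, 0, 0, 0, 0;
     0, 0, 0, 1, 0, 0, 0, 0;
     0, 0, 0, 0, 0, 1, 0, 0]

private lemma mv0 (w : Fin 8 → ℝ) : Lam.mulVec w 0 = w 1 + w 6 := by
  show (Finset.univ.sum fun j => Lam 0 j * w j) = _
  rw [Fin.sum_univ_eight]
  rw [show Lam 0 0 = 0 from rfl, show Lam 0 1 = 1 from rfl, show Lam 0 2 = 0 from rfl, show Lam 0 3 = 0 from rfl, show Lam 0 4 = 0 from rfl, show Lam 0 5 = 0 from rfl, show Lam 0 6 = 1 from rfl, show Lam 0 7 = 0 from rfl]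
  ring
private lemma mv1 (w : Fin 8 → ℝ) : Lam.mulVec w 1 = w 0 := by
  show (Finset.univ.sum fun j => Lam 1 j * w j) = _
  rw [Fin.sum_univ_eight]
  rw [show Lam 1 0 = 1 from rfl, show Lam 1 1 = 0 from rfl, show Lam 1 2 = 0 from rfl, show Lam 1 3 = 0 from rfl, show Lam 1 4 = 0 from rfl, show Lam 1 5 = 0 from rfl, show Lam 1 6 = 0 from rfl, show Lam 1 7 = 0 from rfl]
  ring
private lemma mv2 (w : Fin 8 → ℝ) : Lam.mulVec w 2 = w 4 + w 7 := by
  show (Finset.univ.sum fun j => Lam 2 j * w j) = _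
  rw [Fin.sum_univ_eight]
  rw [show Lam 2 0 = 0 from rfl, show Lam 2 1 = 0 from rfl, show Lam 2 2 = 0 from rfl, show Lam 2 3 = 0 from rfl, show Lam 2 4 = 1 from rfl, show Lam 2 5 = 0 from rfl, show Lam 2 6 = 0 from rfl, show Lam 2 7 = 1 from rfl]
  ring
private lemma mv3 (w : Fin 8 → ℝ) : Lam.mulVec w 3 = w 6 + w 7 := by
  show (Finset.univ.sum fun j => Lam 3 j * w j) = _
  rw [Fin.sum_univ_eight]
  rw [show Lam 3 0 = 0 from rfl, show Lam 3 1 = 0 from rfl, show Lam 3 2 = 0 from rfl, show Lam 3 3 = 0 from rfl, show Lam 3 4 = 0 from rfl, show Lam 3 5 = 0 from rfl, show Lam 3 6 = 1 from rfl, show Lam 3 7 = 1 from rfl]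
  ring
private lemma mv4 (w : Fin 8 → ℝ) : Lam.mulVec w 4 = w 1 := by
  show (Finset.univ.sum fun j => Lam 4 j * w j) = _
  rw [Fin.sum_univ_eight]
  rw [show Lam 4 0 = 0 from rfl, show Lam 4 1 = 1 from rfl, show Lam 4 2 = 0 from rfl, show Lam 4 3 = 0 from rfl, show Lam 4 4 = 0 from rfl, show Lam 4 5 = 0 from rfl, show Lam 4 6 = 0 from rfl, show Lam 4 7 = 0 from rfl]
  ring
private lemma mv5 (w : Fin 8 → ℝ) : Lam.mulVec w 5 = w 2 := by
  show (Finset.univ.sum fun j => Lam 5 j * w j) = _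
  rw [Fin.sum_univ_eight]
  rw [show Lam 5 0 = 0 from rfl, show Lam 5 1 = 0 from rfl, show Lam 5 2 = 1 from rfl, show Lam 5 3 = 0 from rfl, show Lam 5 4 = 0 from rfl, show Lam 5 5 = 0 from rfl, show Lam 5 6 = 0 from rfl, show Lam 5 7 = 0 from rfl]
  ring
private lemma mv6 (w : Fin 8 → ℝ) : Lam.mulVec w 6 = w 3 := by
  show (Finset.univ.sum fun j => Lam 6 j * w j) = _
  rw [Fin.sum_univ_eight]
  rw [show Lam 6 0 = 0 from rfl, show Lam 6 1 = 0 from rfl, show Lam 6 2 = 0 from rfl, show Lam 6 3 = 1 from rfl, show Lam 6 4 = 0 from rfl, show Lam 6 5 = 0 from rfl, show Lam 6 6 = 0 from rfl, show Lam 6 7 = 0 from rfl]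
  ring
private lemma mv7 (w : Fin 8 → ℝ) : Lam.mulVec w 7 = w 5 := by
  show (Finset.univ.sum fun j => Lam 7 j * w j) = _
  rw [Fin.sum_univ_eight]
  rw [show Lam 7 0 = 0 from rfl, show Lam 7 1 = 0 from rfl, show Lam 7 2 = 0 from rfl, show Lam 7 3 = 0 from rfl, show Lam 7 4 = 0 from rfl, show Lam 7 5 = 1 from rfl, show Lam 7 6 = 0 from rfl, show Lam 7 7 = 0 from rfl]
  ring

set_option maxHeartbeats 1000000 in
theorem stmt_13 (lam : ℝ) (hroot : lam ^ 3 - lam - 1 = 0) :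
    (∃ v : Fin 8 → ℝ, v ≠ 0 ∧ Lam.mulVec v = lam • v) ∧
    ∀ mu : ℝ, (∃ v : Fin 8 → ℝ, v ≠ 0 ∧ Lam.mulVec v = mu • v) → mu ≤ lam := by
  have hlam1 : 1 < lam := by
    nlinarith [sq_nonneg lam, sq_nonneg (lam - 1), sq_nonneg (lam + 1), sq_nonneg (lam^2 - 1)]
  constructor
  · refine ⟨![lam + 1, lam^2, lam^2, lam^2, lam, lam, lam, 1], ?_, ?_⟩
    · intro h
      have := congrFun h 7
      have h7 : (![lam + 1, lam^2, lam^2, lam^2, lam, lam, lam, 1] : Fin 8 → ℝ) 7 = 1 := rfl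
      rw [h7] at this
      simpa using this
    · funext i
      set w : Fin 8 → ℝ := ![lam + 1, lam^2, lam^2, lam^2, lam, lam, lam, 1] with hw
      have w0 : w 0 = lam + 1 := rfl
      have w1 : w 1 = lam^2 := rfl
      have w2 : w 2 = lam^2 := rfl
      have w3 : w 3 = lam^2 := rfl
      have w4 : w 4 = lam := rfl
      have w5 : w 5 = lam := rfl
      have w6 : w 6 = lam := rfl
      have w7 : w 7 = 1 := rfl
      fin_cases i
      · show Lam.mulVec w 0 = (lam • w) 0
        rw [mv0, Pi.smul_apply, smul_eq_mul, w0, w1, w6]; ring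
      · show Lam.mulVec w 1 = (lam • w) 1
        rw [mv1, Pi.smul_apply, smul_eq_mul, w0, w1]; linear_combination -hroot
      · show Lam.mulVec w 2 = (lam • w) 2
        rw [mv2, Pi.smul_apply, smul_eq_mul, w2, w4, w7]; linear_combination -hroot
      · show Lam.mulVec w 3 = (lam • w) 3
        rw [mv3, Pi.smul_apply, smul_eq_mul, w3, w6, w7]; linear_combination -hroot
      · show Lam.mulVec w 4 = (lam • w) 4
        rw [mv4, Pi.smul_apply, smul_eq_mul, w1, w4]; ring
      · show Lam.mulVec w 5 = (lam • w) 5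
        rw [mv5, Pi.smul_apply, smul_eq_mul, w2, w5]; ring
      · show Lam.mulVec w 6 = (lam • w) 6
        rw [mv6, Pi.smul_apply, smul_eq_mul, w3, w6]; ring
      · show Lam.mulVec w 7 = (lam • w) 7
        rw [mv7, Pi.smul_apply, smul_eq_mul, w5, w7]; ring
  · rintro mu ⟨v, hv, heq⟩
    by_contra hle
    push_neg at hle
    have hmu1 : 1 < mu := lt_trans hlam1 hle
    have h0 : v 1 + v 6 = mu * v 0 := by
      have := congrFun heq 0; rw [mv0] at this; simpa using this
    have h1 : v 0 = mu * v 1 := by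
      have := congrFun heq 1; rw [mv1] at this; simpa using this
    have h2 : v 4 + v 7 = mu * v 2 := by
      have := congrFun heq 2; rw [mv2] at this; simpa using this
    have h3 : v 6 + v 7 = mu * v 3 := by
      have := congrFun heq 3; rw [mv3] at this; simpa using this
    have h4 : v 1 = mu * v 4 := by
      have := congrFun heq 4; rw [mv4] at this; simpa using this
    have h5 : v 2 = mu * v 5 := by
      have := congrFun heq 5; rw [mv5] at this; simpa using this
    have h6 : v 3 = mu * v 6 := by
      have := congrFun heq 6; rw [mv6] at this; simpa using this
    have h7 : v 5 = mu * v 7 := by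
      have := congrFun heq 7; rw [mv7] at this; simpa using this
    -- express everything in terms of v 1
    have e6 : v 6 = (mu^2 - 1) * v 1 := by linear_combination h0 + mu * h1
    have e3 : v 3 = mu * (mu^2 - 1) * v 1 := by linear_combination h6 + mu * e6
    have e7 : v 7 = (mu^2 - 1)^2 * v 1 := by linear_combination h3 + mu * e3 - e6
    have e5 : v 5 = mu * (mu^2 - 1)^2 * v 1 := by linear_combination h7 + mu * e7
    have e2 : v 2 = mu^2 * (mu^2 - 1)^2 * v 1 := by linear_combination h5 + mu * e5
    have e4 : v 4 = (mu^3 - 1) * (mu^2 - 1)^2 * v 1 := by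
      linear_combination h2 + mu * e2 - e7
    have key : v 1 = mu * (mu^3 - 1) * (mu^2 - 1)^2 * v 1 := by
      linear_combination h4 + mu * e4
    -- v 1 ≠ 0
    have hv1 : v 1 ≠ 0 := by
      intro hz
      apply hv
      funext i
      have z6 : v 6 = 0 := by rw [e6, hz]; ring
      have z3 : v 3 = 0 := by rw [e3, hz]; ring
      have z7 : v 7 = 0 := by rw [e7, hz]; ring
      have z5 : v 5 = 0 := by rw [e5, hz]; ring
      have z2 : v 2 = 0 := by rw [e2, hz]; ring
      have z4 : v 4 = 0 := by rw [e4, hz]; ring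
      have z0 : v 0 = 0 := by rw [h1, hz]; ring
      fin_cases i <;> simp [hz, z0, z2, z3, z4, z5, z6, z7]
    have hAB : (mu^3 - mu) * ((mu^3 - 1) * (mu^2 - 1)) = 1 := by
      have hc : (mu * (mu^3 - 1) * (mu^2 - 1)^2 - 1) * v 1 = 0 := by
        linear_combination -key
      rcases mul_eq_zero.1 hc with h | h
      · linear_combination h
      · exact absurd h hv1
    -- now derive contradiction
    have hA : 1 < mu^3 - mu := by
      have hpos : (0:ℝ) < mu^2 + mu * lam + lam^2 - 1 := by nlinarith
      nlinarith [mul_pos (sub_pos.2 hle) hpos]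
    have hB : 1 < (mu^3 - 1) * (mu^2 - 1) := by
      have hBlam : (lam^3 - 1) * (lam^2 - 1) = 1 := by linear_combination lam^2 * hroot
      have h1' : lam^3 - 1 < mu^3 - 1 := by nlinarith
      have h2' : lam^2 - 1 < mu^2 - 1 := by nlinarith
      nlinarith [h1', h2']
    nlinarith [mul_lt_mul_of_pos_left hB (by linarith : (0:ℝ) < mu^3 - mu)]
end

section
/- Let v₀ ∈ ℝ⁸ be a nonzero vector with nonnegative entries, and let Λ be the 8×8 fermion transition matrix. If λ is the unique real root of x³ − x − 1, then the total mass ‖Λⁿ v₀‖₁ grows at most like C·λⁿ for some constant C, i.e., there exists C > 0 with (sum of entries of Λⁿ v₀) ≤ C·λⁿ for all n. -/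
section Vec8
variable {α : Type*} (a b c d e f g h : α)

lemma vec8_0 : ![a,b,c,d,e,f,g,h] (0 : Fin 8) = a := rfl
lemma vec8_1 : ![a,b,c,d,e,f,g,h] (1 : Fin 8) = b := rfl
lemma vec8_2 : ![a,b,c,d,e,f,g,h] (2 : Fin 8) = c := rfl
lemma vec8_3 : ![a,b,c,d,e,f,g,h] (3 : Fin 8) = d := rfl
lemma vec8_4 : ![a,b,c,d,e,f,g,h] (4 : Fin 8) = e := rfl
lemma vec8_5 : ![a,b,c,d,e,f,g,h] (5 : Fin 8) = f := rfl
lemma vec8_6 : ![a,b,c,d,e,f,g,h] (6 : Fin 8) = g := rfl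
lemma vec8_7 : ![a,b,c,d,e,f,g,h] (7 : Fin 8) = h := rfl

end Vec8

theorem stmt_17 (v₀ : Fin 8 → ℝ) (hv₀ : v₀ ≠ 0) (hnn : ∀ i, 0 ≤ v₀ i)
    (lam : ℝ) (hlam : lam ^ 3 - lam - 1 = 0) :
    ∃ C : ℝ, 0 < C ∧ ∀ n : ℕ, ∑ i, (Lam ^ n).mulVec v₀ i ≤ C * lam ^ n := by
  have h1 : 1 < lam := by
    nlinarith [sq_nonneg lam, sq_nonneg (lam - 1), sq_nonneg (lam + 1)]
  set w : Fin 8 → ℝ := ![1, lam, 1, lam, lam^2 - 1, lam, lam^2, lam^2] with hwdef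
  have hε : 0 < lam ^ 2 - 1 := by nlinarith
  have hw : ∀ i, lam ^ 2 - 1 ≤ w i := by
    intro i
    fin_cases i
    · show lam ^ 2 - 1 ≤ 1; nlinarith
    · show lam ^ 2 - 1 ≤ lam; nlinarith
    · show lam ^ 2 - 1 ≤ 1; nlinarith
    · show lam ^ 2 - 1 ≤ lam; nlinarith
    · show lam ^ 2 - 1 ≤ lam ^ 2 - 1; exact le_refl _
    · show lam ^ 2 - 1 ≤ lam; nlinarith
    · show lam ^ 2 - 1 ≤ lam ^ 2; nlinarith
    · show lam ^ 2 - 1 ≤ lam ^ 2; nlinarith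
  have hwnn : ∀ i, 0 ≤ w i := fun i => le_trans hε.le (hw i)
  have hL : ∀ i j, 0 ≤ Lam i j := by
    intro i j
    fin_cases i <;> fin_cases j <;> norm_num [Lam]
  have hnonneg : ∀ n : ℕ, ∀ i, 0 ≤ (Lam ^ n).mulVec v₀ i := by
    intro n
    induction n with
    | zero => simpa using hnn
    | succ n ih =>
      intro i
      have h2 : (Lam ^ (n + 1)).mulVec v₀ = Lam.mulVec ((Lam ^ n).mulVec v₀) := by
        rw [pow_succ', Matrix.mulVec_mulVec]
      rw [h2, Matrix.mulVec, dotProduct]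
      exact Finset.sum_nonneg fun j _ => mul_nonneg (hL i j) (ih j)
  have hstep : ∀ u : Fin 8 → ℝ,
      ∑ i, w i * Lam.mulVec u i = lam * ∑ i, w i * u i := by
    intro u
    simp only [hwdef, Lam, Matrix.mulVec, dotProduct, Fin.sum_univ_eight,
      Matrix.of_apply, vec8_0, vec8_1, vec8_2, vec8_3, vec8_4, vec8_5, vec8_6, vec8_7]
    linear_combination (-(u 4 + u 6 + u 7)) * hlam
  have heig : ∀ n : ℕ,
      ∑ i, w i * (Lam ^ n).mulVec v₀ i = lam ^ n * ∑ i, w i * v₀ i := by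
    intro n
    induction n with
    | zero => simp
    | succ n ih =>
      have h2 : (Lam ^ (n + 1)).mulVec v₀ = Lam.mulVec ((Lam ^ n).mulVec v₀) := by
        rw [pow_succ', Matrix.mulVec_mulVec]
      rw [h2, hstep, ih, pow_succ]
      ring
  set S : ℝ := ∑ i, w i * v₀ i with hSdef
  have hS : 0 ≤ S := Finset.sum_nonneg fun i _ => mul_nonneg (hwnn i) (hnn i)
  refine ⟨(S + 1) / (lam ^ 2 - 1), by positivity, fun n => ?_⟩
  have hlamn : (0:ℝ) < lam ^ n := pow_pos (by linarith) n
  have hb : (lam ^ 2 - 1) * ∑ i, (Lam ^ n).mulVec v₀ i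
      ≤ ∑ i, w i * (Lam ^ n).mulVec v₀ i := by
    rw [Finset.mul_sum]
    exact Finset.sum_le_sum fun i _ =>
      mul_le_mul_of_nonneg_right (hw i) (hnonneg n i)
  rw [heig n] at hb
  rw [div_mul_eq_mul_div, le_div_iff₀ hε]
  nlinarith [hb, hlamn]
end
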